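/- (Main Theorem 4.) Let u₁, u₂ be holomorphic functions of the four complex variables (x, y, t₁, t₂) on an open set, with J := ∂ₓu₁·∂ᵧu₂ − ∂ₓu₂·∂ᵧu₁ ≠ 0. For differential operators P,Q write D(P,Q) := P(u₁)·Q(u₂) − P(u₂)·Q(u₁), so J = D(∂ₓ,∂ᵧ). Suppose the four evolution equations hold: D(∂_{t₁},∂ₓ)/D(∂ᵧ,∂ₓ) = {u₁,u₂;x,y}ₓ, D(∂_{t₁},∂ᵧ)/D(∂ᵧ,∂ₓ) = [u₁,u₂;x,y]ₓ, D(∂_{t₂},∂ₓ)/D(∂ₓ,∂ᵧ) = [u₁,u₂;x,y]ᵧ, D(∂_{t₂},∂ᵧ)/D(∂ₓ,∂ᵧ) = {u₁,u₂;x,y}ᵧ. Define v₁ := {u₁,u₂;x,y}ₓ, w₁ := [u₁,u₂;x,y]ₓ, v₂ := {u₁,u₂;x,y}ᵧ, w₂ := [u₁,u₂;x,y]ᵧ (functions of (x,y,t₁,t₂)). Then: ∂_{t₂}w₁ + ∂_{t₁}v₂ − v₁·∂ᵧv₂ − v₂·∂ₓw₁ + w₁·∂ₓv₂ + w₂·∂ᵧw₁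 = 0 and ∂_{t₁}w₂ + ∂_{t₂}v₁ − v₁·∂ᵧw₂ − v₂·∂ₓv₁ + w₁·∂ₓw₂ + w₂·∂ᵧv₁ = 0. -/

import Mathlib

open Complex

noncomputable section

/-- A point of `ℂ⁴` with coordinates `(x, y, t₁, t₂)`. -/
abbrev Pt : Type := ℂ × ℂ × ℂ × ℂ

/-- Partial derivative in `x`. -/
def pdX (f : Pt → ℂ) (q : Pt) : ℂ :=
  deriv (fun x => f (x, q.2.1, q.2.2.1, q.2.2.2)) q.1

/-- Partial derivative in `y`. -/
def pdY (f : Pt → ℂ) (q : Pt) : ℂ :=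
  deriv (fun y => f (q.1, y, q.2.2.1, q.2.2.2)) q.2.1

/-- Partial derivative in `t₁`. -/
def pdT1 (f : Pt → ℂ) (q : Pt) : ℂ :=
  deriv (fun t => f (q.1, q.2.1, t, q.2.2.2)) q.2.2.1

/-- Partial derivative in `t₂`. -/
def pdT2 (f : Pt → ℂ) (q : Pt) : ℂ :=
  deriv (fun t => f (q.1, q.2.1, q.2.2.1, t)) q.2.2.2

/-- The Jacobian `J(u₁,u₂) = ∂ₓu₁·∂ᵧu₂ − ∂ₓu₂·∂ᵧu₁` in the variables `(x,y)`. -/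
def Jac (u₁ u₂ : Pt → ℂ) (q : Pt) : ℂ :=
  pdX u₁ q * pdY u₂ q - pdX u₂ q * pdY u₁ q

/-- The GL(3) derivative `{u₁,u₂;x,y}ₓ`. -/
def brX (u₁ u₂ : Pt → ℂ) (q : Pt) : ℂ :=
  (pdX u₁ q * pdX (pdX u₂) q - pdX u₂ q * pdX (pdX u₁) q) / Jac u₁ u₂ q

/-- The GL(3) derivative `{u₁,u₂;x,y}ᵧ`. -/
def brY (u₁ u₂ : Pt → ℂ) (q : Pt) : ℂ :=
  -(pdY u₁ q * pdY (pdY u₂) q - pdY u₂ q * pdY (pdY u₁) q) / Jac u₁ u₂ q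

/-- The GL(3) derivative `[u₁,u₂;x,y]ₓ`. -/
def sqX (u₁ u₂ : Pt → ℂ) (q : Pt) : ℂ :=
  ((pdY u₁ q * pdX (pdX u₂) q - pdY u₂ q * pdX (pdX u₁) q)
      + 2 * (pdX u₁ q * pdX (pdY u₂) q - pdX u₂ q * pdX (pdY u₁) q)) / Jac u₁ u₂ q

/-- The GL(3) derivative `[u₁,u₂;x,y]ᵧ`. -/
def sqY (u₁ u₂ : Pt → ℂ) (q : Pt) : ℂ :=
  -((pdX u₁ q * pdY (pdY u₂) q - pdX u₂ q * pdY (pdY u₁) q)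
      + 2 * (pdY u₁ q * pdX (pdY u₂) q - pdY u₂ q * pdX (pdY u₁) q)) / Jac u₁ u₂ q

/-!
The four evolution equations are two `2 × 2` linear systems with determinant `± J`. Solved by
Cramer's rule, they say that `u = u₁` and `u = u₂` both follow the linear flows
`∂_{t₁} u = v₁ ∂ᵧu - w₁ ∂ₓu` and `∂_{t₂} u = v₂ ∂ₓu - w₂ ∂ᵧu`. Expanding
`∂_{t₂} ∂_{t₁} u = ∂_{t₁} ∂_{t₂} u` with these flows and the symmetry of second derivatives, all
second derivatives of `u` cancel and what is left is `∂ₓu · E₁ = ∂ᵧu · E₂`, where `E₁`, `E₂` are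
the two left-hand sides of the claim. For `u₁` and `u₂` together this is a linear system in
`(E₁, E₂)` with determinant `J ≠ 0`, hence `E₁ = E₂ = 0`.

The analytic input is that a holomorphic function of several variables is `C^∞`: a directional
derivative `∂ᵥf(x) = (2π)⁻¹ ∫ e^{-iθ} f(x + e^{iθ} v) dθ` can be differentiated in `x` under the
integral sign, the Cauchy estimate `‖Df‖ ≤ M / r` providing the dominating bound.
-/

open Metric Set Filter Topology MeasureTheory
open scoped Real

section LineDeriv

variable {𝕜 E : Type*} [NontriviallyNormedField 𝕜] [NormedAddCommGroup E] [NormedSpace 𝕜 E]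
  {f g : E → 𝕜} {x v : E}

theorem lineDeriv_fun_mul (hf : DifferentiableAt 𝕜 f x) (hg : DifferentiableAt 𝕜 g x) :
    lineDeriv 𝕜 (fun y => f y * g y) x v = lineDeriv 𝕜 f x v * g x + f x * lineDeriv 𝕜 g x v := by
  rw [(hf.fun_mul hg).lineDeriv_eq_fderiv, hf.lineDeriv_eq_fderiv, hg.lineDeriv_eq_fderiv,
    fderiv_fun_mul hf hg]
  simp only [add_apply, smul_apply, smul_eq_mul]
  ring

theorem lineDeriv_fun_sub (hf : DifferentiableAt 𝕜 f x) (hg : DifferentiableAt 𝕜 g x) :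
    lineDeriv 𝕜 (fun y => f y - g y) x v = lineDeriv 𝕜 f x v - lineDeriv 𝕜 g x v := by
  rw [(hf.fun_sub hg).lineDeriv_eq_fderiv, hf.lineDeriv_eq_fderiv, hg.lineDeriv_eq_fderiv,
    fderiv_fun_sub hf hg]
  rfl

end LineDeriv

theorem eq_mul_sub_mul_of_div_det {K : Type*} [Field K] {x₁ x₂ y₁ y₂ t₁ t₂ a b : K}
    (hJ : x₁ * y₂ - x₂ * y₁ ≠ 0) (ha : (t₁ * x₂ - t₂ * x₁) / (x₁ * y₂ - x₂ * y₁) = a)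
    (hb : (t₁ * y₂ - t₂ * y₁) / (x₁ * y₂ - x₂ * y₁) = b) :
    t₁ = b * x₁ - a * y₁ ∧ t₂ = b * x₂ - a * y₂ := by
  rw [div_eq_iff hJ] at ha hb
  constructor <;> refine mul_left_cancel₀ hJ ?_
  · linear_combination x₁ * hb - y₁ * ha
  · linear_combination x₂ * hb - y₂ * ha

theorem eq_zero_of_mul_eq_mul_of_det_ne_zero {K : Type*} [CommRing K] [NoZeroDivisors K]
    {x₁ x₂ y₁ y₂ g h : K} (hJ : x₁ * y₂ - x₂ * y₁ ≠ 0) (h₁ : x₁ * g = y₁ * h)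
    (h₂ : x₂ * g = y₂ * h) : g = 0 ∧ h = 0 := by
  constructor <;> refine (mul_eq_zero.1 ?_).resolve_left hJ
  · linear_combination y₂ * h₁ - y₁ * h₂
  · linear_combination x₂ * h₁ - x₁ * h₂

section Holomorphic

variable {E F : Type*} [NormedAddCommGroup E] [NormedSpace ℂ E]
  [NormedAddCommGroup F] [NormedSpace ℂ F]

theorem mapsTo_add_smul_closedBall {x w : E} {r : ℝ} (hw : w ≠ 0) :
    MapsTo (fun z : ℂ => x + z • w) (closedBall 0 (r / ‖w‖)) (closedBall x r) := by
  intro z hz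
  rw [mem_closedBall_zero_iff, le_div_iff₀ (norm_pos_iff.2 hw)] at hz
  simpa [dist_eq_norm, norm_smul] using hz

theorem norm_fderiv_le_of_forall_norm_le {f : E → F} {x : E} {r M : ℝ} (hr : 0 < r)
    (hf : DifferentiableOn ℂ f (closedBall x r)) (hM : ∀ y ∈ closedBall x r, ‖f y‖ ≤ M) :
    ‖fderiv ℂ f x‖ ≤ M / r := by
  have hM0 : 0 ≤ M := (norm_nonneg _).trans (hM x (mem_closedBall_self hr.le))
  refine ContinuousLinearMap.opNorm_le_bound _ (by positivity) fun w => ?_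
  rcases eq_or_ne w 0 with rfl | hw
  · simp
  have hR : 0 < r / ‖w‖ := by positivity
  have hline : DifferentiableOn ℂ (fun z : ℂ => f (x + z • w)) (closedBall 0 (r / ‖w‖)) :=
    hf.comp (by fun_prop) (mapsTo_add_smul_closedBall hw)
  have hderiv : HasDerivAt (fun z : ℂ => f (x + z • w)) (fderiv ℂ f x w) 0 :=
    (hf.differentiableAt (closedBall_mem_nhds x hr)).hasFDerivAt.hasLineDerivAt w
  have := norm_deriv_le_of_forall_mem_sphere_norm_le hR
    (hline.mono closure_ball_subset_closedBall).diffContOnCl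
    fun z hz => hM _ (mapsTo_add_smul_closedBall hw (sphere_subset_closedBall hz))
  rw [hderiv.deriv] at this
  calc ‖fderiv ℂ f x w‖ ≤ M / (r / ‖w‖) := this
    _ = M / r * ‖w‖ := by field_simp

theorem fderiv_apply_eq_smul_integral [CompleteSpace F] {f : E → F} {x v : E}
    (hf : ∀ z ∈ closedBall (0 : ℂ) 1, DifferentiableAt ℂ f (x + z • v)) :
    fderiv ℂ f x v = (2 * π : ℂ)⁻¹ •
      ∫ θ in (0 : ℝ)..2 * π, cexp (-(θ * I)) • f (x + cexp (θ * I) • v) := by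
  have hline : DifferentiableOn ℂ (fun z : ℂ => f (x + z • v)) (closedBall 0 1) :=
    fun z hz => ((hf z hz).comp z (by fun_prop)).differentiableWithinAt
  have hx : DifferentiableAt ℂ f x := by simpa using hf 0 (mem_closedBall_self zero_le_one)
  have hderiv : HasDerivAt (fun z : ℂ => f (x + z • v)) (fderiv ℂ f x v) 0 :=
    hx.hasFDerivAt.hasLineDerivAt v
  have hcauchy := hline.deriv_eq_smul_circleIntegral one_pos
  rw [hderiv.deriv, circleIntegral] at hcauchy
  -- on the unit circle `dz / z ^ 2 = I * exp (-θ I) dθ`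
  have hint : ∀ θ : ℝ, deriv (circleMap 0 1) θ • (1 / (circleMap 0 1 θ - 0) ^ 2) •
      f (x + circleMap 0 1 θ • v) = I • cexp (-(θ * I)) • f (x + cexp (θ * I) • v) := by
    intro θ
    simp only [deriv_circleMap, circleMap, smul_smul]
    congr 1
    · rw [exp_neg]; field_simp; push_cast; ring
    · simp
  simp only [hint, intervalIntegral.integral_smul] at hcauchy
  rw [← inv_smul_eq_iff₀ (by simp [Real.pi_ne_zero, I_ne_zero])] at hcauchy
  rw [← hcauchy, smul_smul]
  congr 1
  field_simp [I_ne_zero]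

theorem differentiableAt_intervalIntegral_smul_comp_add [FiniteDimensional ℂ E]
    [CompleteSpace F] [SecondCountableTopology F] {f : E → F} {k : ℝ → ℂ} {γ : ℝ → E}
    {U : Set E} {x₀ : E} {a b C : ℝ} (hk : Continuous k) (hγ : Continuous γ) (hU : U ∈ 𝓝 x₀)
    (hf : ∀ x ∈ U, ∀ θ, DifferentiableAt ℂ f (x + γ θ))
    (hC : ∀ x ∈ U, ∀ θ, ‖fderiv ℂ f (x + γ θ)‖ ≤ C) :
    DifferentiableAt ℂ (fun x => ∫ θ in a..b, k θ • f (x + γ θ)) x₀ := by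
  borelize E
  have hcont : ∀ x ∈ U, Continuous fun θ => k θ • f (x + γ θ) := fun x hx =>
    hk.smul (continuous_iff_continuousAt.2 fun θ =>
      (hf x hx θ).continuousAt.comp (f := fun θ => x + γ θ) (by fun_prop))
  refine (intervalIntegral.hasFDerivAt_integral_of_dominated_of_fderiv_le
    (F' := fun x θ => k θ • fderiv ℂ f (x + γ θ)) (bound := fun θ => ‖k θ‖ * C) hU
    (eventually_of_mem hU fun x hx => (hcont x hx).aestronglyMeasurable)
    ((hcont x₀ (mem_of_mem_nhds hU)).intervalIntegrable a b)
    (hk.aestronglyMeasurable.smul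
      ((measurable_fderiv ℂ f).comp (by fun_prop)).aestronglyMeasurable)
    (ae_of_all _ fun θ _ x hx => ?_)
    ((by fun_prop : Continuous fun θ => ‖k θ‖ * C).intervalIntegrable a b)
    (ae_of_all _ fun θ _ x hx => ?_)).differentiableAt
  · rw [norm_smul]
    exact mul_le_mul_of_nonneg_left (hC x hx θ) (norm_nonneg _)
  · exact ((hf x hx θ).hasFDerivAt.comp x ((hasFDerivAt_id x).add_const (γ θ))).const_smul (k θ)

theorem differentiableAt_fderiv_apply_of_norm_le [FiniteDimensional ℂ E] [CompleteSpace F]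
    [SecondCountableTopology F] {f : E → F} {a v : E} {r : ℝ} (hr : 0 < r)
    (hf : DifferentiableOn ℂ f (closedBall a (3 * r))) (hv : ‖v‖ ≤ r) :
    DifferentiableAt ℂ (fun x => fderiv ℂ f x v) a := by
  obtain ⟨M, hM⟩ := (isCompact_closedBall a (3 * r)).exists_bound_of_continuousOn hf.continuousOn
  -- the discs `x + z • v`, `‖z‖ ≤ 1`, centred in `ball a r` stay in `closedBall a (2 * r)`,
  -- where the Cauchy estimate with radius `r` bounds `fderiv ℂ f`
  have hdisc : ∀ x ∈ ball a r, ∀ z ∈ closedBall (0 : ℂ) 1, x + z • v ∈ closedBall a (2 * r) := by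
    intro x hx z hz
    rw [mem_closedBall_zero_iff] at hz
    have : ‖z • v‖ ≤ r := by
      rw [norm_smul]; nlinarith [norm_nonneg z, norm_nonneg v]
    rw [mem_closedBall, dist_eq_norm, add_sub_right_comm]
    linarith [norm_add_le (x - a) (z • v), mem_ball_iff_norm.1 hx]
  have hdiff : ∀ y ∈ closedBall a (2 * r), DifferentiableAt ℂ f y := fun y hy =>
    hf.differentiableAt (closedBall_mem_nhds_of_mem (closedBall_subset_ball (by linarith) hy))
  have hcircle : ∀ θ : ℝ, cexp ((θ : ℂ) * I) ∈ closedBall (0 : ℂ) 1 := fun θ => by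
    simp [Complex.norm_exp_ofReal_mul_I]
  have hrep : (fun x => fderiv ℂ f x v) =ᶠ[𝓝 a] fun x => (2 * π : ℂ)⁻¹ •
      ∫ θ in (0 : ℝ)..2 * π, cexp (-(θ * I)) • f (x + cexp (θ * I) • v) :=
    eventually_of_mem (ball_mem_nhds a hr) fun x hx =>
      fderiv_apply_eq_smul_integral fun z hz => hdiff _ (hdisc x hx z hz)
  refine hrep.differentiableAt_iff.2 (DifferentiableAt.const_smul ?_ _)
  refine differentiableAt_intervalIntegral_smul_comp_add (C := M / r) (by fun_prop) (by fun_prop)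
    (ball_mem_nhds a hr) (fun x hx θ => hdiff _ (hdisc x hx _ (hcircle θ))) fun x hx θ => ?_
  have hball : closedBall (x + cexp (θ * I) • v) r ⊆ closedBall a (3 * r) :=
    closedBall_subset_closedBall' (by linarith [mem_closedBall.1 (hdisc x hx _ (hcircle θ))])
  exact norm_fderiv_le_of_forall_norm_le hr (hf.mono hball) fun y hy => hM y (hball hy)

theorem DifferentiableOn.differentiableOn_fderiv_apply [FiniteDimensional ℂ E] [CompleteSpace F]
    [SecondCountableTopology F] {f : E → F} {s : Set E} (hf : DifferentiableOn ℂ f s)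
    (hs : IsOpen s) (v : E) : DifferentiableOn ℂ (fun x => fderiv ℂ f x v) s := by
  intro a ha
  obtain ⟨r, hr, hsub⟩ : ∃ r > 0, closedBall a (3 * r) ⊆ s := by
    obtain ⟨ε, hε, hεs⟩ := Metric.isOpen_iff.1 hs a ha
    exact ⟨ε / 4, by positivity, (closedBall_subset_ball (by linarith)).trans hεs⟩
  obtain ⟨c, hc, hcv⟩ : ∃ c : ℂ, c ≠ 0 ∧ ‖c • v‖ ≤ r := by
    rcases eq_or_ne v 0 with rfl | hv
    · exact ⟨1, one_ne_zero, by simpa using hr.le⟩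
    refine ⟨(r / ‖v‖ : ℝ), by simp [hr.ne', hv], ?_⟩
    rw [norm_smul, norm_real, Real.norm_of_nonneg (by positivity), div_mul_cancel₀]
    exact norm_ne_zero_iff.2 hv
  have hscale : (fun x => fderiv ℂ f x v) = c⁻¹ • fun x => fderiv ℂ f x (c • v) := by
    ext x; simp [smul_smul, inv_mul_cancel₀ hc]
  rw [hscale]
  exact ((differentiableAt_fderiv_apply_of_norm_le hr (hf.mono hsub) hcv).const_smul
    c⁻¹).differentiableWithinAt

theorem DifferentiableOn.contDiffOn_of_finiteDimensional [FiniteDimensional ℂ E] [CompleteSpace F]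
    [SecondCountableTopology F] {f : E → F} {s : Set E} {n : ℕ∞} (hf : DifferentiableOn ℂ f s)
    (hs : IsOpen s) : ContDiffOn ℂ n f s := by
  suffices ∀ m : ℕ, ∀ g : E → F, DifferentiableOn ℂ g s → ContDiffOn ℂ m g s from
    (contDiffOn_infty.2 fun m => this m f hf).of_le (mod_cast le_top)
  intro m
  induction m with
  | zero => exact fun g hg => contDiffOn_zero.2 hg.continuousOn
  | succ m ih =>
    intro g hg
    push_cast
    refine contDiffOn_succ_of_fderiv_apply hg (by simp) fun v => ?_
    exact (ih _ (hg.differentiableOn_fderiv_apply hs v)).congr fun _ hx => by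
      rw [fderivWithin_of_isOpen hs hx]

theorem DifferentiableOn.differentiableOn_lineDeriv [FiniteDimensional ℂ E] [CompleteSpace F]
    [SecondCountableTopology F] {f : E → F} {s : Set E} (hf : DifferentiableOn ℂ f s)
    (hs : IsOpen s) (v : E) : DifferentiableOn ℂ (fun x => lineDeriv ℂ f x v) s :=
  (hf.differentiableOn_fderiv_apply hs v).congr fun _ hx =>
    (hf.differentiableAt (hs.mem_nhds hx)).lineDeriv_eq_fderiv

theorem lineDeriv_lineDeriv_comm [FiniteDimensional ℂ E] [CompleteSpace F]
    [SecondCountableTopology F] {f : E → F} {s : Set E} (hf : DifferentiableOn ℂ f s)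
    (hs : IsOpen s) {x : E} (hx : x ∈ s) (v w : E) :
    lineDeriv ℂ (fun y => lineDeriv ℂ f y w) x v =
      lineDeriv ℂ (fun y => lineDeriv ℂ f y v) x w := by
  have hf₂ : ContDiffAt ℂ 2 f x :=
    (hf.contDiffOn_of_finiteDimensional hs).contDiffAt (hs.mem_nhds hx)
  have hdf : DifferentiableAt ℂ (fderiv ℂ f) x :=
    (hf₂.fderiv_right (m := 1) le_rfl).differentiableAt one_ne_zero
  have key : ∀ v w : E,
      lineDeriv ℂ (fun y => lineDeriv ℂ f y w) x v = fderiv ℂ (fderiv ℂ f) x v w := by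
    intro v w
    have hloc : (fun y => lineDeriv ℂ f y w) =ᶠ[𝓝 x] fun y => fderiv ℂ f y w :=
      eventually_of_mem (hs.mem_nhds hx) fun y hy =>
        (hf.differentiableAt (hs.mem_nhds hy)).lineDeriv_eq_fderiv
    rw [hloc.lineDeriv_eq, (hdf.clm_apply (differentiableAt_const w)).lineDeriv_eq_fderiv,
      fderiv_clm_apply hdf (differentiableAt_const w)]
    simp
  rw [key, key, hf₂.isSymmSndFDerivAt (by simp)]

theorem lineDeriv_mul_eq_mul_of_flows [FiniteDimensional ℂ E] {Ω : Set E} (hΩ : IsOpen Ω)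
    {u V₁ W₁ V₂ W₂ : E → ℂ} (hu : DifferentiableOn ℂ u Ω) (hV₁ : DifferentiableOn ℂ V₁ Ω)
    (hW₁ : DifferentiableOn ℂ W₁ Ω) (hV₂ : DifferentiableOn ℂ V₂ Ω)
    (hW₂ : DifferentiableOn ℂ W₂ Ω) {ex ey e₁ e₂ : E}
    (h₁ : EqOn (fun p => lineDeriv ℂ u p e₁)
      (fun p => V₁ p * lineDeriv ℂ u p ey - W₁ p * lineDeriv ℂ u p ex) Ω)
    (h₂ : EqOn (fun p => lineDeriv ℂ u p e₂)
      (fun p => V₂ p * lineDeriv ℂ u p ex - W₂ p * lineDeriv ℂ u p ey) Ω)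
    {q : E} (hq : q ∈ Ω) :
    lineDeriv ℂ u q ex * (lineDeriv ℂ W₁ q e₂ + lineDeriv ℂ V₂ q e₁
        - V₁ q * lineDeriv ℂ V₂ q ey - V₂ q * lineDeriv ℂ W₁ q ex
        + W₁ q * lineDeriv ℂ V₂ q ex + W₂ q * lineDeriv ℂ W₁ q ey)
      = lineDeriv ℂ u q ey * (lineDeriv ℂ W₂ q e₁ + lineDeriv ℂ V₁ q e₂
        - V₁ q * lineDeriv ℂ W₂ q ey - V₂ q * lineDeriv ℂ V₁ q ex
        + W₁ q * lineDeriv ℂ W₂ q ex + W₂ q * lineDeriv ℂ V₁ q ey) := by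
  have hn : Ω ∈ 𝓝 q := hΩ.mem_nhds hq
  have dx := (hu.differentiableOn_lineDeriv hΩ ex).differentiableAt hn
  have dy := (hu.differentiableOn_lineDeriv hΩ ey).differentiableAt hn
  have dV₁ := hV₁.differentiableAt hn
  have dW₁ := hW₁.differentiableAt hn
  have dV₂ := hV₂.differentiableAt hn
  have dW₂ := hW₂.differentiableAt hn
  have d₁ : ∀ v, lineDeriv ℂ (fun p => lineDeriv ℂ u p e₁) q v
      = lineDeriv ℂ V₁ q v * lineDeriv ℂ u q ey
          + V₁ q * lineDeriv ℂ (fun p => lineDeriv ℂ u p ey) q v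
        - (lineDeriv ℂ W₁ q v * lineDeriv ℂ u q ex
          + W₁ q * lineDeriv ℂ (fun p => lineDeriv ℂ u p ex) q v) := fun v => by
    rw [(h₁.eventuallyEq_of_mem hn).lineDeriv_eq, lineDeriv_fun_sub (dV₁.fun_mul dy)
      (dW₁.fun_mul dx), lineDeriv_fun_mul dV₁ dy, lineDeriv_fun_mul dW₁ dx]
  have d₂ : ∀ v, lineDeriv ℂ (fun p => lineDeriv ℂ u p e₂) q v
      = lineDeriv ℂ V₂ q v * lineDeriv ℂ u q ex
          + V₂ q * lineDeriv ℂ (fun p => lineDeriv ℂ u p ex) q v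
        - (lineDeriv ℂ W₂ q v * lineDeriv ℂ u q ey
          + W₂ q * lineDeriv ℂ (fun p => lineDeriv ℂ u p ey) q v) := fun v => by
    rw [(h₂.eventuallyEq_of_mem hn).lineDeriv_eq, lineDeriv_fun_sub (dV₂.fun_mul dx)
      (dW₂.fun_mul dy), lineDeriv_fun_mul dV₂ dx, lineDeriv_fun_mul dW₂ dy]
  have comm := lineDeriv_lineDeriv_comm hu hΩ hq
  have h₂₁ := d₁ e₂
  have h₁₂ := d₂ e₁
  rw [comm e₂ ey, comm e₂ ex, d₂, d₂] at h₂₁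
  rw [comm e₁ ex, comm e₁ ey, d₁, d₁] at h₁₂
  linear_combination h₂₁ - h₁₂ - comm e₂ e₁ + (W₁ q * W₂ q - V₁ q * V₂ q) * comm ex ey

end Holomorphic

def eX : Pt := (1, 0, 0, 0)
def eY : Pt := (0, 1, 0, 0)
def eT1 : Pt := (0, 0, 1, 0)
def eT2 : Pt := (0, 0, 0, 1)

theorem pdX_eq_lineDeriv (f : Pt → ℂ) : pdX f = fun q => lineDeriv ℂ f q eX := by
  ext q
  rw [pdX, lineDeriv, ← zero_add q.1, ← deriv_comp_add_const]
  congr 1; ext t; congr 1; ext <;> simp [eX, add_comm]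

theorem pdY_eq_lineDeriv (f : Pt → ℂ) : pdY f = fun q => lineDeriv ℂ f q eY := by
  ext q
  rw [pdY, lineDeriv, ← zero_add q.2.1, ← deriv_comp_add_const]
  congr 1; ext t; congr 1; ext <;> simp [eY, add_comm]

theorem pdT1_eq_lineDeriv (f : Pt → ℂ) : pdT1 f = fun q => lineDeriv ℂ f q eT1 := by
  ext q
  rw [pdT1, lineDeriv, ← zero_add q.2.2.1, ← deriv_comp_add_const]
  congr 1; ext t; congr 1; ext <;> simp [eT1, add_comm]

theorem pdT2_eq_lineDeriv (f : Pt → ℂ) : pdT2 f = fun q => lineDeriv ℂ f q eT2 := by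
  ext q
  rw [pdT2, lineDeriv, ← zero_add q.2.2.2, ← deriv_comp_add_const]
  congr 1; ext t; congr 1; ext <;> simp [eT2, add_comm]

theorem differentiableOn_brX_sqX_brY_sqY {Ω : Set Pt} (hΩ : IsOpen Ω) {u₁ u₂ : Pt → ℂ}
    (hu₁ : DifferentiableOn ℂ u₁ Ω) (hu₂ : DifferentiableOn ℂ u₂ Ω)
    (hJ : ∀ q ∈ Ω, Jac u₁ u₂ q ≠ 0) :
    DifferentiableOn ℂ (brX u₁ u₂) Ω ∧ DifferentiableOn ℂ (sqX u₁ u₂) Ω ∧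
      DifferentiableOn ℂ (brY u₁ u₂) Ω ∧ DifferentiableOn ℂ (sqY u₁ u₂) Ω := by
  have hX : ∀ f, DifferentiableOn ℂ f Ω → DifferentiableOn ℂ (pdX f) Ω := fun f hf =>
    pdX_eq_lineDeriv f ▸ hf.differentiableOn_lineDeriv hΩ eX
  have hY : ∀ f, DifferentiableOn ℂ f Ω → DifferentiableOn ℂ (pdY f) Ω := fun f hf =>
    pdY_eq_lineDeriv f ▸ hf.differentiableOn_lineDeriv hΩ eY
  have := hX _ (hX _ hu₁); have := hX _ (hX _ hu₂); have := hX _ (hY _ hu₁)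
  have := hX _ (hY _ hu₂); have := hY _ (hY _ hu₁); have := hY _ (hY _ hu₂)
  have := hX _ hu₁; have := hX _ hu₂; have := hY _ hu₁; have := hY _ hu₂
  have hJac : DifferentiableOn ℂ (Jac u₁ u₂) Ω := by unfold Jac; fun_prop
  have hdiv : ∀ N, DifferentiableOn ℂ N Ω → DifferentiableOn ℂ (fun q => N q / Jac u₁ u₂ q) Ω :=
    fun N hN => by simpa only [div_eq_mul_inv] using hN.fun_mul (hJac.fun_inv hJ)
  exact ⟨hdiv _ (by fun_prop), hdiv _ (by fun_prop), hdiv _ (by fun_prop), hdiv _ (by fun_prop)⟩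

/-- **Main Theorem 4.** If `(u₁,u₂)` solves the four GL(3)-invariant
evolution equations, then `v₁ = {u₁,u₂;x,y}ₓ`, `w₁ = [u₁,u₂;x,y]ₓ`,
`v₂ = {u₁,u₂;x,y}ᵧ`, `w₂ = [u₁,u₂;x,y]ᵧ` satisfy the two coupled nonlinear
evolution equations. -/
theorem statement18 (Ω : Set Pt) (hΩ : IsOpen Ω)
    (u₁ u₂ : Pt → ℂ)
    (hu₁ : DifferentiableOn ℂ u₁ Ω) (hu₂ : DifferentiableOn ℂ u₂ Ω)
    (hJ : ∀ q ∈ Ω, Jac u₁ u₂ q ≠ 0)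
    (hev₁ : ∀ q ∈ Ω,
      (pdT1 u₁ q * pdX u₂ q - pdT1 u₂ q * pdX u₁ q) /
        (pdY u₁ q * pdX u₂ q - pdY u₂ q * pdX u₁ q) = brX u₁ u₂ q)
    (hev₂ : ∀ q ∈ Ω,
      (pdT1 u₁ q * pdY u₂ q - pdT1 u₂ q * pdY u₁ q) /
        (pdY u₁ q * pdX u₂ q - pdY u₂ q * pdX u₁ q) = sqX u₁ u₂ q)
    (hev₃ : ∀ q ∈ Ω,
      (pdT2 u₁ q * pdX u₂ q - pdT2 u₂ q * pdX u₁ q) /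
        (pdX u₁ q * pdY u₂ q - pdX u₂ q * pdY u₁ q) = sqY u₁ u₂ q)
    (hev₄ : ∀ q ∈ Ω,
      (pdT2 u₁ q * pdY u₂ q - pdT2 u₂ q * pdY u₁ q) /
        (pdX u₁ q * pdY u₂ q - pdX u₂ q * pdY u₁ q) = brY u₁ u₂ q)
    (v₁ w₁ v₂ w₂ : Pt → ℂ)
    (hv₁ : v₁ = brX u₁ u₂) (hw₁ : w₁ = sqX u₁ u₂)
    (hv₂ : v₂ = brY u₁ u₂) (hw₂ : w₂ = sqY u₁ u₂) :
    ∀ q ∈ Ω,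
      (pdT2 w₁ q + pdT1 v₂ q - v₁ q * pdY v₂ q - v₂ q * pdX w₁ q
        + w₁ q * pdX v₂ q + w₂ q * pdY w₁ q = 0) ∧
      (pdT1 w₂ q + pdT2 v₁ q - v₁ q * pdY w₂ q - v₂ q * pdX v₁ q
        + w₁ q * pdX w₂ q + w₂ q * pdY v₁ q = 0) := by
  subst hv₁ hw₁ hv₂ hw₂
  obtain ⟨hV₁, hW₁, hV₂, hW₂⟩ := differentiableOn_brX_sqX_brY_sqY hΩ hu₁ hu₂ hJ
  simp only [Jac, pdX_eq_lineDeriv, pdY_eq_lineDeriv, pdT1_eq_lineDeriv, pdT2_eq_lineDeriv]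
    at hJ hev₁ hev₂ hev₃ hev₄ ⊢
  -- the denominator of `hev₁`, `hev₂` is `-J`: Cramer's rule with `x` and `y` exchanged
  have flow₁ := fun q hq =>
    eq_mul_sub_mul_of_div_det (fun h => hJ q hq (by linear_combination -h)) (hev₂ q hq) (hev₁ q hq)
  have flow₂ := fun q hq => eq_mul_sub_mul_of_div_det (hJ q hq) (hev₃ q hq) (hev₄ q hq)
  intro q hq
  exact eq_zero_of_mul_eq_mul_of_det_ne_zero (hJ q hq)
    (lineDeriv_mul_eq_mul_of_flows hΩ hu₁ hV₁ hW₁ hV₂ hW₂ (fun p hp => (flow₁ p hp).1)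
      (fun p hp => (flow₂ p hp).1) hq)
    (lineDeriv_mul_eq_mul_of_flows hΩ hu₂ hV₁ hW₁ hV₂ hW₂ (fun p hp => (flow₁ p hp).2)
      (fun p hp => (flow₂ p hp).2) hq)
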